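/- arXiv:1105.4906 — 4 statements merged into one kernel-verified Lean document; each statement's English description precedes it below -/
import Mathlib

section
/- For σ ∈ S_N define A_σ(ξ) = ∏_{(k,ℓ) inversion of σ} S(ξ_k,ξ_ℓ) with S(ξ,ξ') = -(p+qξξ'-ξ)/(p+qξξ'-ξ'). Then A_σ satisfies the ASEP boundary relation: for every i, (p + q·ξ_{σ(i)}ξ_{σ(i+1)} - ξ_{σ(i+1)})·A_σ(ξ) + (p + q·ξ_{σ(i)}ξ_{σ(i+1)} - ξ_{σ(i)})·A_{T_iσ}(ξ) = 0, provided all denominators are nonzero. -/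
/-!
If the entries of `σ` at the adjacent positions `i`, `i + 1` form an inversion, swapping them
removes exactly that inversion and leaves every other pair's relative order unchanged, so
`A σ = S(ξ (σ i), ξ (σ (i+1))) * A (σ * swap i (i+1))`; the boundary relation is then just the
definition of `S`. When they do not form an inversion, the same argument applies to
`σ * swap i (i+1)`.
-/

open Equiv Finset

variable {α : Type*} [LinearOrder α]

theorem swap_lt_swap_iff_of_covBy {i j x y : α} (hij : i ⋖ j)
    (hxy : ¬(x = i ∧ y = j)) (hyx : ¬(x = j ∧ y = i)) :
    swap i j x < swap i j y ↔ x < y := by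
  have hlt := @hij.lt_iff_le_left
  have hle := @hij.le_iff_lt_right
  simp only [swap_apply_def]
  split_ifs <;> grind

variable [Fintype α]

def Equiv.Perm.inversions (σ : Perm α) : Finset (α × α) :=
  univ.filter fun pr => pr.2 < pr.1 ∧ σ.symm pr.1 < σ.symm pr.2

theorem Equiv.Perm.mk_apply_mem_inversions {σ : Perm α} {x y : α} :
    (σ x, σ y) ∈ σ.inversions ↔ σ y < σ x ∧ x < y := by
  simp [Perm.inversions]

theorem Equiv.Perm.inversions_mul_swap {σ : Perm α} {i j : α} (hij : i ⋖ j) (h : σ j < σ i) :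
    (σ * swap i j).inversions = σ.inversions.erase (σ i, σ j) := by
  ext ⟨a, b⟩
  obtain ⟨x, rfl⟩ := σ.surjective a
  obtain ⟨y, rfl⟩ := σ.surjective b
  have hmul : ∀ z, σ z = (σ * swap i j) (swap i j z) := by simp
  rw [mem_erase, mk_apply_mem_inversions, hmul x, hmul y, mk_apply_mem_inversions, ← hmul, ← hmul]
  by_cases hxy : x = i ∧ y = j
  · obtain ⟨rfl, rfl⟩ := hxy
    simp [hij.lt.le]
  by_cases hyx : x = j ∧ y = i
  · obtain ⟨rfl, rfl⟩ := hyx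
    simp [h.not_gt]
  rw [swap_lt_swap_iff_of_covBy hij hxy hyx]
  simp only [ne_eq, Prod.mk.injEq, σ.injective.eq_iff]
  tauto

theorem Equiv.Perm.prod_inversions_eq_mul_prod_inversions_mul_swap {M : Type*} [CommMonoid M]
    (f : α × α → M) {σ : Perm α} {i j : α} (hij : i ⋖ j) (h : σ j < σ i) :
    ∏ pr ∈ σ.inversions, f pr = f (σ i, σ j) * ∏ pr ∈ (σ * swap i j).inversions, f pr := by
  rw [inversions_mul_swap hij h, mul_prod_erase _ _ (mk_apply_mem_inversions.2 ⟨h, hij.lt⟩)]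

theorem boundary_relation_of_eq_mul {K : Type*} [Field K] {p q : K} {S : K → K → K}
    (hS : ∀ x x', S x x' = -(p + q * x * x' - x) / (p + q * x * x' - x')) {a b A₁ A₂ : K}
    (hb : p + q * a * b - b ≠ 0) (hA : A₁ = S a b * A₂) :
    (p + q * a * b - b) * A₁ + (p + q * a * b - a) * A₂ = 0 := by
  rw [hA, hS]
  field_simp
  ring

theorem stmt5 (N : ℕ) (p q : ℂ) (ξ : Fin N → ℂ) (S : ℂ → ℂ → ℂ)
    (hS : ∀ x x', S x x' = -(p + q * x * x' - x) / (p + q * x * x' - x'))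
    (hden : ∀ k ℓ : Fin N, p + q * ξ k * ξ ℓ - ξ ℓ ≠ 0)
    (A : Equiv.Perm (Fin N) → ℂ)
    (hA : ∀ τ, A τ = ∏ pr ∈ Finset.univ.filter
        (fun pr : Fin N × Fin N => pr.2 < pr.1 ∧ τ.symm pr.1 < τ.symm pr.2),
        S (ξ pr.1) (ξ pr.2))
    (σ : Equiv.Perm (Fin N)) (i j : Fin N) (hj : (j : ℕ) = (i : ℕ) + 1) :
    (p + q * ξ (σ i) * ξ (σ j) - ξ (σ j)) * A σ
      + (p + q * ξ (σ i) * ξ (σ j) - ξ (σ i)) * A (σ * Equiv.swap i j) = 0 := by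
  have hij : i ⋖ j := ⟨Fin.lt_def.2 (by omega), fun k hik hkj => by
    rw [Fin.lt_def] at hik hkj; omega⟩
  have hA_inv : ∀ τ : Perm (Fin N), A τ = ∏ pr ∈ τ.inversions, S (ξ pr.1) (ξ pr.2) := hA
  have hA_swap : ∀ τ : Perm (Fin N), τ j < τ i → A τ = S (ξ (τ i)) (ξ (τ j)) * A (τ * swap i j) :=
    fun τ h => by rw [hA_inv, hA_inv, Perm.prod_inversions_eq_mul_prod_inversions_mul_swap _ hij h]
  rcases (σ.injective.ne hij.ne).lt_or_gt with h | h
  · have hswap := hA_swap (σ * swap i j) (by simpa using h)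
    simp only [Perm.mul_apply, swap_apply_left, swap_apply_right, mul_swap_mul_self] at hswap
    linear_combination boundary_relation_of_eq_mul hS (hden _ _) hswap
  · exact boundary_relation_of_eq_mul hS (hden _ _) (hA_swap σ h)
end

section
/- Let H₀ be the set of functions h assigning to each species map π : {1,…,N} → {1,…,M} a function of ξ = (ξ_1,…,ξ_N), and let H = S_N × H₀. Define T_i : H → H by T_i(σ,h) = (T_iσ, h + (1 + S(ξ_{σ(i)},ξ_{σ(i+1)}))·[α_i·(h ∘ T_i) - β_i·h]), where (h∘T_i)(π) = h(T_iπ), α_i(π), β_i(π) are the multispecies ASEP rates, and S is the ASEP scattering factor. Then T_i ∘ T_i is the identity on H (wherever all denominators are nonzero). -/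
/-!
Write `D = α·h(T_iπ) - β·h(π)`. Since `α_i(T_iπ) = β_i(π)` and `β_i(T_iπ) = α_i(π)`, the first
application of `T_i` adds `(1 + s)·D` at `π` and `-(1 + s)·D` at `T_iπ`, where `s = S(ξ_{σ(i)}, ξ_{σ(i+1)})`.
The second application sees the swapped permutation, hence the factor `1 + s'` with
`s' = S(ξ_{σ(i+1)}, ξ_{σ(i)}) = s⁻¹`, and adds `-(1 + s')·s·D = -(1 + s)·D` when `α + β = 1`;
when `π(i) = π(i+1)` both rates vanish and nothing changes.
-/

open Equiv

section Rates

variable {R ι κ : Type*} [Zero R] [LinearOrder κ]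

/-- `α_i = asepRate p q i (i + 1)` and `β_i = asepRate q p i (i + 1)`. -/
def asepRate (p q : R) (a b : ι) (ρ : ι → κ) : R :=
  if ρ a = ρ b then 0 else if ρ a < ρ b then p else q

theorem asepRate_comp_swap [DecidableEq ι] (p q : R) (ρ : ι → κ) (a b : ι) :
    asepRate p q a b (ρ ∘ swap a b) = asepRate q p a b ρ := by
  rcases lt_trichotomy (ρ a) (ρ b) with hlt | heq | hgt
  · simp [asepRate, hlt, hlt.ne, hlt.ne', hlt.not_gt]
  · simp [asepRate, heq]
  · simp [asepRate, hgt, hgt.ne, hgt.ne', hgt.not_gt]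

theorem asepRate_add_eq_one_or_eq_zero {R : Type*} [AddCommMonoid R] [One R] {p q : R}
    (hpq : p + q = 1) (a b : ι) (ρ : ι → κ) :
    asepRate p q a b ρ + asepRate q p a b ρ = 1 ∨
      asepRate p q a b ρ = 0 ∧ asepRate q p a b ρ = 0 := by
  unfold asepRate
  split_ifs <;> simp_all [add_comm]

end Rates

theorem asep_scattering_mul_swap {K : Type*} [Field K] (p q x y : K)
    (hxy : p + q * x * y - y ≠ 0) (hyx : p + q * y * x - x ≠ 0) :
    -(p + q * x * y - x) / (p + q * x * y - y) * (-(p + q * y * x - y) / (p + q * y * x - x)) = 1 := by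
  rw [mul_right_comm q y x] at hyx ⊢
  field_simp

/-- `T_i ∘ T_i` at `π`, with `u = h π`, `v = h (T_i π)`, `a = α_i(π)`, `b = β_i(π)`. -/
theorem exchange_update_twice {R : Type*} [CommRing R] {s s' a b u v : R} (hs : s * s' = 1)
    (hab : a + b = 1 ∨ a = 0 ∧ b = 0) :
    u + (1 + s) * (a * v - b * u) +
      (1 + s') * (a * (v + (1 + s) * (b * u - a * v)) - b * (u + (1 + s) * (a * v - b * u))) = u := by
  rcases hab with hab | ⟨rfl, rfl⟩
  · linear_combination (-(a + b) * (a * v - b * u)) * hs - (a * v - b * u) * (2 + s + s') * hab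
  · ring

theorem stmt10_general (N M : ℕ) (p q : ℂ) (hpq : p + q = 1)
    (S : ℂ → ℂ → ℂ)
    (hS : ∀ x x', S x x' = -(p + q * x * x' - x) / (p + q * x * x' - x'))
    (α β : Fin N → Fin N → (Fin N → Fin M) → ℂ)
    (hα : ∀ a b ρ, α a b ρ = if ρ a = ρ b then 0 else if ρ a < ρ b then p else q)
    (hβ : ∀ a b ρ, β a b ρ = if ρ a = ρ b then 0 else if ρ a < ρ b then q else p)
    (T : Fin N → Fin N →
      Equiv.Perm (Fin N) × ((Fin N → Fin M) → (Fin N → ℂ) → ℂ) →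
      Equiv.Perm (Fin N) × ((Fin N → Fin M) → (Fin N → ℂ) → ℂ))
    (hT : ∀ a b σ h, T a b (σ, h) =
      (σ * Equiv.swap a b, fun π ξ =>
        h π ξ + (1 + S (ξ (σ a)) (ξ (σ b))) *
          (α a b π * h (π ∘ Equiv.swap a b) ξ - β a b π * h π ξ)))
    (i j : Fin N)
    (σ : Equiv.Perm (Fin N)) (h : (Fin N → Fin M) → (Fin N → ℂ) → ℂ) :
    (T i j (T i j (σ, h))).1 = σ ∧
      ∀ (π : Fin N → Fin M) (ξ : Fin N → ℂ),
        (∀ a b : Fin N, p + q * ξ a * ξ b - ξ b ≠ 0) →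
        (T i j (T i j (σ, h))).2 π ξ = h π ξ := by
  have hα' : α = asepRate p q := by ext; exact hα ..
  have hβ' : β = asepRate q p := by ext; exact hβ ..
  subst hα' hβ'
  refine ⟨by simp [hT, mul_assoc], fun π ξ hden => ?_⟩
  have hs : S (ξ (σ i)) (ξ (σ j)) * S (ξ (σ j)) (ξ (σ i)) = 1 := by
    rw [hS, hS]
    exact asep_scattering_mul_swap p q _ _ (hden _ _) (hden _ _)
  have hππ : π ∘ swap i j ∘ swap i j = π := by ext; simp
  simp only [hT, Perm.mul_apply, swap_apply_left, swap_apply_right, Function.comp_assoc, hππ,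
    asepRate_comp_swap]
  exact exchange_update_twice hs (asepRate_add_eq_one_or_eq_zero hpq i j π)

/-- T_i ∘ T_i = id on H = S_N × H₀ for the multispecies ASEP operators. -/
theorem stmt10 (N M : ℕ) (p q : ℂ) (hpq : p + q = 1)
    (S : ℂ → ℂ → ℂ)
    (hS : ∀ x x', S x x' = -(p + q * x * x' - x) / (p + q * x * x' - x'))
    (α β : Fin N → Fin N → (Fin N → Fin M) → ℂ)
    (hα : ∀ a b ρ, α a b ρ = if ρ a = ρ b then 0 else if ρ a < ρ b then p else q)
    (hβ : ∀ a b ρ, β a b ρ = if ρ a = ρ b then 0 else if ρ a < ρ b then q else p)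
    (T : Fin N → Fin N →
      Equiv.Perm (Fin N) × ((Fin N → Fin M) → (Fin N → ℂ) → ℂ) →
      Equiv.Perm (Fin N) × ((Fin N → Fin M) → (Fin N → ℂ) → ℂ))
    (hT : ∀ a b σ h, T a b (σ, h) =
      (σ * Equiv.swap a b, fun π ξ =>
        h π ξ + (1 + S (ξ (σ a)) (ξ (σ b))) *
          (α a b π * h (π ∘ Equiv.swap a b) ξ - β a b π * h π ξ)))
    (i j : Fin N) (hj : (j : ℕ) = (i : ℕ) + 1)
    (σ : Equiv.Perm (Fin N)) (h : (Fin N → Fin M) → (Fin N → ℂ) → ℂ) :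
    (T i j (T i j (σ, h))).1 = σ ∧
      ∀ (π : Fin N → Fin M) (ξ : Fin N → ℂ),
        (∀ a b : Fin N, p + q * ξ a * ξ b - ξ b ≠ 0) →
        (T i j (T i j (σ, h))).2 π ξ = h π ξ :=
  stmt10_general N M p q hpq S hS α β hα hβ T hT i j σ h
end

section
/- For N = 3, the multispecies ASEP operators T_1, T_2 on H = S_3 × H₀ satisfy the braid relation T_1 ∘ T_2 ∘ T_1 = T_2 ∘ T_1 ∘ T_2 (wherever all denominators are nonzero). -/
/-!
For fixed spectral parameters `ξ`, the operator `T_i` acts on the functions of the species map as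
`1 + s • L_i`, where `L_i` is the local generator of the multispecies ASEP on the bond `i` and the
scalar `s = 1 + S(ξ_{σ(i)}, ξ_{σ(i+1)})` is read off the permutation component. Both sides of the
braid relation are thus products of three such factors, carrying the scalars of the three pairs of
spectral parameters in opposite orders. The generators satisfy the Hecke-type relations
`L_i² = -(p + q) L_i` and `L₁L₂L₁ - L₂L₁L₂ = pq (L₁ - L₂)`, so the two products agree as soon as
the scalars satisfy `s_{13} = s_{23} + s_{12} - (p + q) s_{23} s_{12} + pq s_{23} s_{13} s_{12}`;
for `1 + S` this holds with `1` in place of `p + q`.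
-/

open Equiv

theorem one_add_smul_braid_of_hecke {K A : Type*} [CommRing K] [Ring A] [Algebra K A]
    {s u a b c : K} {k₀ k₁ : A}
    (h₀ : k₀ * k₀ = -s • k₀) (h₁ : k₁ * k₁ = -s • k₁)
    (hbraid : k₀ * k₁ * k₀ - k₁ * k₀ * k₁ = u • (k₀ - k₁))
    (hb : b = a + c - s * a * c + u * a * b * c) :
    (1 + a • k₀) * (1 + b • k₁) * (1 + c • k₀) =
      (1 + c • k₁) * (1 + b • k₀) * (1 + a • k₁) := by
  rw [← sub_eq_zero]
  calc _ = (a + c - s * a * c + u * a * b * c - b) • (k₀ - k₁)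
        + (a * b * c) • (k₀ * k₁ * k₀ - k₁ * k₀ * k₁ - u • (k₀ - k₁))
        + (a * c) • (k₀ * k₀ + s • k₀ - (k₁ * k₁ + s • k₁)) := by
          simp only [mul_add, add_mul, one_mul, mul_one, smul_mul_assoc, mul_smul_comm, smul_sub,
            smul_add, smul_smul, mul_assoc]
          module
    _ = 0 := by rw [hbraid, h₀, h₁, ← hb]; simp

section Swap

variable {ι κ : Type*} [DecidableEq ι]

theorem comp_swap_comp_swap (π : ι → κ) (a b : ι) : π ∘ swap a b ∘ swap a b = π := by
  funext x
  simp [swap_apply_self]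

theorem comp_swap_braid (π : ι → κ) {a b c : ι} (hab : a ≠ b) (hbc : b ≠ c) (hac : a ≠ c) :
    π ∘ swap a b ∘ swap b c ∘ swap a b = π ∘ swap b c ∘ swap a b ∘ swap b c := by
  funext x
  simp only [Function.comp_apply, swap_apply_def]
  split_ifs <;> grind

end Swap

namespace MultispeciesASEP

section Scattering

variable {F : Type*} [Field F]

def S (p q x y : F) : F := -(p + q * x * y - x) / (p + q * x * y - y)

def scatteringFactor (p q x y : F) : F := (x - y) / (p + q * x * y - y)

theorem one_add_S {p q x y : F} (h : p + q * x * y - y ≠ 0) :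
    1 + S p q x y = scatteringFactor p q x y := by
  rw [S, scatteringFactor, one_add_div h]
  ring

theorem scatteringFactor_yangBaxter {p q x y z : F} (hxy : p + q * x * y - y ≠ 0)
    (hyz : p + q * y * z - z ≠ 0) (hxz : p + q * x * z - z ≠ 0) :
    scatteringFactor p q x z = scatteringFactor p q y z + scatteringFactor p q x y
      - scatteringFactor p q y z * scatteringFactor p q x y
      + p * q * scatteringFactor p q y z * scatteringFactor p q x z
        * scatteringFactor p q x y := by
  unfold scatteringFactor
  generalize hA : p + q * x * y - y = A at *
  generalize hB : p + q * y * z - z = B at *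
  generalize hC : p + q * x * z - z = C at *
  field_simp
  rw [← hA, ← hB, ← hC]
  ring

end Scattering

section LocalGenerator

variable {R ι κ : Type*} [CommRing R] [DecidableEq ι] [LinearOrder κ]

/-- `rate p q (π a) (π b)` is the rate `α` of the bond `(a, b)` and `rate q p (π a) (π b)` its
rate `β`. -/
def rate (x y : R) (u v : κ) : R := if u = v then 0 else if u < v then x else y

theorem rate_of_lt {x y : R} {u v : κ} (h : u < v) : rate x y u v = x := by
  simp [rate, h.ne, h]

theorem rate_of_gt {x y : R} {u v : κ} (h : v < u) : rate x y u v = y := by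
  simp [rate, h.ne', h.not_gt]

theorem rate_self (x y : R) (u : κ) : rate x y u u = 0 := if_pos rfl

def localGenerator (p q : R) (a b : ι) : Module.End R ((ι → κ) → R) where
  toFun f π := rate p q (π a) (π b) * f (π ∘ swap a b) - rate q p (π a) (π b) * f π
  map_add' f g := by ext π; simp only [Pi.add_apply]; ring
  map_smul' r f := by ext π; simp only [Pi.smul_apply, smul_eq_mul, RingHom.id_apply]; ring

variable (p q : R)

theorem localGenerator_apply (a b : ι) (f : (ι → κ) → R) (π : ι → κ) :
    localGenerator p q a b f π =
      rate p q (π a) (π b) * f (π ∘ swap a b) - rate q p (π a) (π b) * f π :=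
  rfl

theorem localGenerator_mul_self (a b : ι) :
    localGenerator (κ := κ) p q a b * localGenerator p q a b =
      -(p + q) • localGenerator p q a b := by
  ext f π
  simp only [Module.End.mul_apply, LinearMap.smul_apply, Pi.smul_apply, smul_eq_mul,
    localGenerator_apply, Function.comp_apply, swap_apply_left, swap_apply_right,
    Function.comp_assoc, comp_swap_comp_swap]
  rcases lt_trichotomy (π a) (π b) with h | h | h <;>
    simp only [rate_of_lt, rate_of_gt, rate_self, *] <;> ring

theorem localGenerator_braid {a b c : ι} (hab : a ≠ b) (hbc : b ≠ c) (hac : a ≠ c) :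
    localGenerator (κ := κ) p q a b * localGenerator p q b c * localGenerator p q a b
      - localGenerator p q b c * localGenerator p q a b * localGenerator p q b c
      = (p * q) • (localGenerator p q a b - localGenerator p q b c) := by
  have hc : swap a b c = c := swap_apply_of_ne_of_ne hac.symm hbc.symm
  have ha : swap b c a = a := swap_apply_of_ne_of_ne hab hac
  ext f π
  simp only [Module.End.mul_apply, LinearMap.sub_apply, LinearMap.smul_apply, Pi.sub_apply,
    Pi.smul_apply, smul_eq_mul, localGenerator_apply, Function.comp_apply, swap_apply_left,
    swap_apply_right, ha, hc, Function.comp_assoc, comp_swap_comp_swap,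
    comp_swap_braid π hab hbc hac]
  rcases lt_trichotomy (π a) (π b) with h₁ | h₁ | h₁ <;>
  rcases lt_trichotomy (π b) (π c) with h₂ | h₂ | h₂ <;>
  rcases lt_trichotomy (π a) (π c) with h₃ | h₃ | h₃ <;>
  first
  | (exfalso; order)
  | (simp only [rate_of_lt, rate_of_gt, rate_self, *]; ring)

end LocalGenerator

section Operator

variable {F ι κ : Type*} [Field F] [DecidableEq ι] [LinearOrder κ]

def operator (p q : F) (a b : ι) (X : Perm ι × ((ι → κ) → (ι → F) → F)) :
    Perm ι × ((ι → κ) → (ι → F) → F) :=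
  (X.1 * swap a b, fun π ξ => X.2 π ξ +
    (1 + S p q (ξ (X.1 a)) (ξ (X.1 b))) * localGenerator p q a b (fun π => X.2 π ξ) π)

theorem operator_fst (p q : F) (a b : ι) (X : Perm ι × ((ι → κ) → (ι → F) → F)) :
    (operator p q a b X).1 = X.1 * swap a b :=
  rfl

theorem operator_snd {p q : F} (a b : ι) (X : Perm ι × ((ι → κ) → (ι → F) → F))
    {ξ : ι → F} (h : p + q * ξ (X.1 a) * ξ (X.1 b) - ξ (X.1 b) ≠ 0) :
    (fun π => (operator p q a b X).2 π ξ) =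
      (1 + scatteringFactor p q (ξ (X.1 a)) (ξ (X.1 b)) • localGenerator p q a b)
        (fun π => X.2 π ξ) := by
  funext π
  simp only [operator, one_add_S h, LinearMap.add_apply, LinearMap.smul_apply,
    Module.End.one_apply, Pi.add_apply, Pi.smul_apply, smul_eq_mul]

theorem operator_braid_fst (p q : F) {a b c : ι} (hab : a ≠ b) (hbc : b ≠ c) (hac : a ≠ c)
    (X : Perm ι × ((ι → κ) → (ι → F) → F)) :
    (operator p q a b (operator p q b c (operator p q a b X))).1 =
      (operator p q b c (operator p q a b (operator p q b c X))).1 :=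
  Perm.ext fun x => congrFun (comp_swap_braid X.1 hab hbc hac) x

theorem operator_braid_snd {p q : F} (hpq : p + q = 1) {a b c : ι} (hab : a ≠ b)
    (hbc : b ≠ c) (hac : a ≠ c) (X : Perm ι × ((ι → κ) → (ι → F) → F)) {ξ : ι → F}
    (hξ : ∀ i j, p + q * ξ i * ξ j - ξ j ≠ 0) :
    (fun π => (operator p q a b (operator p q b c (operator p q a b X))).2 π ξ) =
      fun π => (operator p q b c (operator p q a b (operator p q b c X))).2 π ξ := by
  have hc : swap a b c = c := swap_apply_of_ne_of_ne hac.symm hbc.symm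
  have ha : swap b c a = a := swap_apply_of_ne_of_ne hab hac
  set sab := scatteringFactor p q (ξ (X.1 a)) (ξ (X.1 b))
  set sbc := scatteringFactor p q (ξ (X.1 b)) (ξ (X.1 c))
  set sac := scatteringFactor p q (ξ (X.1 a)) (ξ (X.1 c))
  set L₀ : Module.End F ((ι → κ) → F) := localGenerator p q a b
  set L₁ : Module.End F ((ι → κ) → F) := localGenerator p q b c
  have hbraid := one_add_smul_braid_of_hecke (a := sbc) (b := sac) (c := sab) (k₀ := L₀)
    (k₁ := L₁) (localGenerator_mul_self p q a b) (localGenerator_mul_self p q b c)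
    (localGenerator_braid p q hab hbc hac)
    (by rw [hpq, one_mul]; exact scatteringFactor_yangBaxter (hξ _ _) (hξ _ _) (hξ _ _))
  calc _ = ((1 + sbc • L₀) * (1 + sac • L₁) * (1 + sab • L₀)) (fun π => X.2 π ξ) := by
        simp only [operator_snd _ _ _ (hξ _ _), operator_fst, Perm.mul_apply,
          swap_apply_left, swap_apply_right, ha, hc, Module.End.mul_apply]
        rfl
    _ = ((1 + sab • L₁) * (1 + sac • L₀) * (1 + sbc • L₁)) (fun π => X.2 π ξ) := by
        rw [hbraid]
    _ = _ := by
        simp only [operator_snd _ _ _ (hξ _ _), operator_fst, Perm.mul_apply,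
          swap_apply_left, swap_apply_right, ha, hc, Module.End.mul_apply]
        rfl

end Operator

end MultispeciesASEP

/-- The braid relation T₁T₂T₁ = T₂T₁T₂ for the multispecies ASEP operators with N = 3.
Here T₁ acts at positions (0,1) and T₂ at positions (1,2) of `Fin 3`. -/
theorem stmt12 (M : ℕ) (p q : ℂ) (hpq : p + q = 1)
    (S : ℂ → ℂ → ℂ)
    (hS : ∀ x x', S x x' = -(p + q * x * x' - x) / (p + q * x * x' - x'))
    (α β : Fin 3 → Fin 3 → (Fin 3 → Fin M) → ℂ)
    (hα : ∀ a b ρ, α a b ρ = if ρ a = ρ b then 0 else if ρ a < ρ b then p else q)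
    (hβ : ∀ a b ρ, β a b ρ = if ρ a = ρ b then 0 else if ρ a < ρ b then q else p)
    (T : Fin 3 → Fin 3 →
      Equiv.Perm (Fin 3) × ((Fin 3 → Fin M) → (Fin 3 → ℂ) → ℂ) →
      Equiv.Perm (Fin 3) × ((Fin 3 → Fin M) → (Fin 3 → ℂ) → ℂ))
    (hT : ∀ a b σ h, T a b (σ, h) =
      (σ * Equiv.swap a b, fun π ξ =>
        h π ξ + (1 + S (ξ (σ a)) (ξ (σ b))) *
          (α a b π * h (π ∘ Equiv.swap a b) ξ - β a b π * h π ξ)))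
    (σ : Equiv.Perm (Fin 3)) (h : (Fin 3 → Fin M) → (Fin 3 → ℂ) → ℂ) :
    (T 0 1 (T 1 2 (T 0 1 (σ, h)))).1 = (T 1 2 (T 0 1 (T 1 2 (σ, h)))).1 ∧
      ∀ (π : Fin 3 → Fin M) (ξ : Fin 3 → ℂ),
        (∀ a b : Fin 3, p + q * ξ a * ξ b - ξ b ≠ 0) →
        (T 0 1 (T 1 2 (T 0 1 (σ, h)))).2 π ξ
          = (T 1 2 (T 0 1 (T 1 2 (σ, h)))).2 π ξ := by
  obtain rfl : S = MultispeciesASEP.S p q := funext₂ hS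
  obtain rfl : T = MultispeciesASEP.operator p q := by
    funext a b ⟨σ, f⟩
    rw [hT]
    simp only [MultispeciesASEP.operator, MultispeciesASEP.localGenerator_apply,
      MultispeciesASEP.rate, hα, hβ]
  exact ⟨MultispeciesASEP.operator_braid_fst p q (by decide) (by decide) (by decide) (σ, h),
    fun π ξ hξ => congrFun
      (MultispeciesASEP.operator_braid_snd hpq (by decide) (by decide) (by decide) (σ, h) hξ) π⟩
end

section
/- Let σ, σ' ∈ S_N agree except that the positions of values i and j are interchanged (with i ≠ j), let ξ be such that ξ_i = ξ_j, and suppose the recursion h_{T_kτ}^π = h_τ^π + (1 + S(ξ_{τ(k)},ξ_{τ(k+1)}))·[α_k(π)·h_τ^{T_kπ} - β_k(π)·h_τ^π], with initial data h_e^π = δ_ν(π), consistently defines h_τ^π for all τ ∈ S_N. Then h_σ^π = h_{σ'}^π for every π. -/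
/-!
Write `σ' = σ * swap a b` with `a = σ⁻¹ i`, `b = σ⁻¹ j`, and induct on `b - a`. For adjacent
positions the recursion step from `σ` to `σ'` carries the factor `1 + S(ξ_i, ξ_j) = 0`. Otherwise
conjugate by the adjacent transposition `s = swap a (a + 1)`: `σ * swap a b = σ s * swap (a+1) b * s`,
the induction hypothesis identifies `h` at `σ s * swap (a+1) b` and at `σ s`, and since these two
permutations give the same rapidities at every position, one more recursion step applied to both
preserves the equality.
-/

open Equiv

section

variable {N : ℕ} {A Φ R : Type*} [Semiring R]

/-- The multispecies ASEP recursion, with `T_k τ = τ * swap k (k + 1)`, weights `w` (the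
rapidities `ξ`) and coefficient `c` (the factor `1 + S`). -/
def AdjacentSwapRecursion (w : Fin N → A) (c : A → A → R)
    (L : Fin N → Fin N → (Φ → R) → Φ → R) (h : Perm (Fin N) → Φ → R) : Prop :=
  ∀ (τ : Perm (Fin N)) (k k' : Fin N), (k' : ℕ) = k + 1 →
    h (τ * swap k k') = h τ + c (w (τ k)) (w (τ k')) • L k k' (h τ)

theorem comp_mul_swap_of_apply_eq {B : Type*} {w : Fin N → B} {τ : Perm (Fin N)}
    {a b : Fin N} (hab : w (τ a) = w (τ b)) : w ∘ ⇑(τ * swap a b) = w ∘ τ := by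
  funext x
  simp only [Function.comp_apply, Perm.mul_apply, swap_apply_def]
  split_ifs with hxa hxb
  · rw [hxa, hab]
  · rw [hxb, hab]
  · rfl

variable {w : Fin N → A} {c : A → A → R} {L : Fin N → Fin N → (Φ → R) → Φ → R}
  {h : Perm (Fin N) → Φ → R}

namespace AdjacentSwapRecursion

theorem mul_swap_congr (hrec : AdjacentSwapRecursion w c L h) {ρ τ : Perm (Fin N)}
    (hh : h ρ = h τ) (hw : w ∘ ρ = w ∘ τ) {k k' : Fin N} (hk : (k' : ℕ) = k + 1) :
    h (ρ * swap k k') = h (τ * swap k k') := by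
  rw [hrec ρ k k' hk, hrec τ k k' hk, hh]
  congr 3 <;> exact congrFun hw _

theorem apply_mul_swap_of_lt (hrec : AdjacentSwapRecursion w c L h)
    (hc : ∀ a, c (w a) (w a) = 0) (n : ℕ) :
    ∀ (σ : Perm (Fin N)) (a b : Fin N), (b : ℕ) = a + n + 1 → w (σ a) = w (σ b) →
      h (σ * swap a b) = h σ := by
  induction n with
  | zero =>
    intro σ a b hab hw
    rw [hrec σ a b hab, hw, hc, zero_smul, add_zero]
  | succ n ih =>
    intro σ a b hab hw
    set a' : Fin N := ⟨a + 1, by omega⟩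
    have ha' : (a' : ℕ) = a + 1 := rfl
    set s := swap a a'
    have hs : s * swap a' b * s = swap a b := by
      have hsa' : s a' = a := swap_apply_right a a'
      have hsb : s b = b := swap_apply_of_ne_of_ne (by omega) (by omega)
      conv_rhs => rw [← hsa', ← hsb, swap_apply_apply, swap_inv]
    have hwτ : w ((σ * s) a') = w ((σ * s) b) := by
      rwa [Perm.mul_apply, swap_apply_right, Perm.mul_apply,
        swap_apply_of_ne_of_ne (by omega) (by omega)]
    have hτ : h (σ * s * swap a' b) = h (σ * s) := ih (σ * s) a' b (by omega) hwτ
    calc h (σ * swap a b) = h (σ * s * swap a' b * s) := by rw [← hs]; group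
      _ = h (σ * s * s) := mul_swap_congr hrec hτ (comp_mul_swap_of_apply_eq hwτ) ha'
      _ = h σ := by rw [mul_assoc, swap_mul_self, mul_one]

theorem apply_mul_swap (hrec : AdjacentSwapRecursion w c L h) (hc : ∀ a, c (w a) (w a) = 0)
    (σ : Perm (Fin N)) {a b : Fin N} (hab : w (σ a) = w (σ b)) : h (σ * swap a b) = h σ := by
  rcases lt_trichotomy (a : ℕ) b with hlt | heq | hgt
  · exact apply_mul_swap_of_lt hrec hc (b - a - 1) σ a b (by omega) hab
  · rw [Fin.ext heq, swap_self]
    rfl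
  · rw [swap_comm]
    exact apply_mul_swap_of_lt hrec hc (a - b - 1) σ b a (by omega) hab.symm

theorem apply_swap_mul (hrec : AdjacentSwapRecursion w c L h) (hc : ∀ a, c (w a) (w a) = 0)
    (σ : Perm (Fin N)) {i j : Fin N} (hij : w i = w j) : h (swap i j * σ) = h σ := by
  rw [swap_mul_eq_mul_swap]
  exact apply_mul_swap hrec hc σ (by simpa using hij)

end AdjacentSwapRecursion

end

theorem stmt19_general (N M : ℕ) (p q : ℂ)
    (ξ : Fin N → ℂ)
    (S : ℂ → ℂ → ℂ)
    (hS : ∀ x x', S x x' = -(p + q * x * x' - x) / (p + q * x * x' - x'))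
    (hden : ∀ k ℓ : Fin N, p + q * ξ k * ξ ℓ - ξ ℓ ≠ 0)
    (α β : Fin N → Fin N → (Fin N → Fin M) → ℂ)
    (h : Equiv.Perm (Fin N) → (Fin N → Fin M) → ℂ)
    (hrec : ∀ (τ : Equiv.Perm (Fin N)) (π : Fin N → Fin M) (k k' : Fin N),
      (k' : ℕ) = (k : ℕ) + 1 →
      h (τ * Equiv.swap k k') π = h τ π
        + (1 + S (ξ (τ k)) (ξ (τ k'))) *
          (α k k' π * h τ (π ∘ Equiv.swap k k') - β k k' π * h τ π))
    (i j : Fin N) (hξ : ξ i = ξ j)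
    (σ σ' : Equiv.Perm (Fin N)) (hpair : σ' = Equiv.swap i j * σ) :
    ∀ π : Fin N → Fin M, h σ π = h σ' π := by
  have hasep : AdjacentSwapRecursion ξ (fun x x' => 1 + S x x')
      (fun k k' g π => α k k' π * g (π ∘ swap k k') - β k k' π * g π) h :=
    fun τ k k' hk => funext fun π => hrec τ π k k' hk
  have hdiag : ∀ a, 1 + S (ξ a) (ξ a) = 0 := fun a => by
    rw [hS, neg_div, div_self (hden a a), add_neg_cancel]
  intro π
  rw [hpair, hasep.apply_swap_mul hdiag σ hξ]

/-- If σ and σ' agree except that the positions of the values i and j are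
interchanged, and ξ_i = ξ_j, then h_σ^π = h_{σ'}^π for every π, where the h's
satisfy the multispecies ASEP recursion with initial data h_e^π = δ_ν(π). -/
theorem stmt19 (N M : ℕ) (p q : ℂ) (hpq : p + q = 1)
    (ξ : Fin N → ℂ)
    (S : ℂ → ℂ → ℂ)
    (hS : ∀ x x', S x x' = -(p + q * x * x' - x) / (p + q * x * x' - x'))
    (hden : ∀ k ℓ : Fin N, p + q * ξ k * ξ ℓ - ξ ℓ ≠ 0)
    (α β : Fin N → Fin N → (Fin N → Fin M) → ℂ)
    (hα : ∀ a b ρ, α a b ρ = if ρ a = ρ b then 0 else if ρ a < ρ b then p else q)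
    (hβ : ∀ a b ρ, β a b ρ = if ρ a = ρ b then 0 else if ρ a < ρ b then q else p)
    (ν : Fin N → Fin M)
    (h : Equiv.Perm (Fin N) → (Fin N → Fin M) → ℂ)
    (hinit : ∀ π, h 1 π = if π = ν then 1 else 0)
    (hrec : ∀ (τ : Equiv.Perm (Fin N)) (π : Fin N → Fin M) (k k' : Fin N),
      (k' : ℕ) = (k : ℕ) + 1 →
      h (τ * Equiv.swap k k') π = h τ π
        + (1 + S (ξ (τ k)) (ξ (τ k'))) *
          (α k k' π * h τ (π ∘ Equiv.swap k k') - β k k' π * h τ π))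
    (i j : Fin N) (hij : i ≠ j) (hξ : ξ i = ξ j)
    (σ σ' : Equiv.Perm (Fin N)) (hpair : σ' = Equiv.swap i j * σ) :
    ∀ π : Fin N → Fin M, h σ π = h σ' π :=
  stmt19_general N M p q ξ S hS hden α β h hrec i j hξ σ σ' hpair
end
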